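/- A strictly hyperideal triangle is determined up to hyperbolic isometry by its three edge lengths: for any positive real numbers l₁, l₂, l₃ there is at most one hyperideal triangle (up to isometries of H² extended to the projective plane) with edge lengths l₁, l₂, l₃; moreover such a triangle admits no nontrivial infinitesimal deformation preserving its edge lengths. -/

import Mathlib

open scoped RealInnerProductSpace

abbrev E2 := EuclideanSpace ℝ (Fin 2)

/-- The Minkowski bilinear form on `ℝ³` (signature `(-,+,+)`). -/
def mink3 (x y : Fin 3 → ℝ) : ℝ := -(x 0 * y 0) + x 1 * y 1 + x 2 * y 2

/-- The homogeneous lift `(1, p)` of a point `p` of the projective model plane. -/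
def lift2 (p : E2) : Fin 3 → ℝ := ![1, p 0, p 1]

/-- A strictly hyperideal triangle in the projective model: three affinely independent
points outside the closed unit disk, each edge meeting the open disk. -/
def IsStrictHyperidealTriangle (v : Fin 3 → E2) : Prop :=
  AffineIndependent ℝ v ∧ (∀ i, 1 < ‖v i‖) ∧
  ∀ i j, i ≠ j → ∃ t ∈ Set.Ioo (0 : ℝ) 1, ‖v i + t • (v j - v i)‖ < 1

/-- The edge length of a strictly hyperideal triangle: the hyperbolic distance between
the dual geodesics of the two endpoints (the length of the corresponding 'real edge'
of the truncated right-angled hexagon),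
`cosh ℓ = |⟪p,q⟫ - 1| / (√(‖p‖²-1) √(‖q‖²-1))`. -/
noncomputable def hlen2 (p q : E2) : ℝ :=
  Real.log (|⟪p, q⟫ - 1| / (Real.sqrt (‖p‖ ^ 2 - 1) * Real.sqrt (‖q‖ ^ 2 - 1)) +
    Real.sqrt ((|⟪p, q⟫ - 1| / (Real.sqrt (‖p‖ ^ 2 - 1) * Real.sqrt (‖q‖ ^ 2 - 1))) ^ 2 - 1))

/-!
Lift the vertices to `xᵢ = (1, vᵢ)` in Minkowski space `ℝ^{1,2}` (the form `mink3`). Each `xᵢ` is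
spacelike, and since the edge `[vᵢ, vⱼ]` meets the disk, the plane spanned by `xᵢ, xⱼ` contains a
timelike vector; hence `⟪xᵢ, xⱼ⟫ < 0` and `|⟪xᵢ, xⱼ⟫| > ‖xᵢ‖ ‖xⱼ‖`, and the edge length is
`cosh ℓᵢⱼ = -⟪xᵢ, xⱼ⟫ / (‖xᵢ‖ ‖xⱼ‖)`. So the Gram matrix of the normalised lifts `xᵢ / ‖xᵢ‖` is `1`
on the diagonal and `-cosh ℓᵢⱼ` off it, and the lifts form a basis: two triangles with the same
lengths have the same Gram matrix, and the linear map matching their normalised lifts is a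
Lorentz transformation. Differentiating the Gram matrix instead, stationary lengths give
`⟪xᵢ', xⱼ⟫ + ⟪xᵢ, xⱼ'⟫ = (cᵢ + cⱼ) ⟪xᵢ, xⱼ⟫` with `cᵢ = ⟪xᵢ', xᵢ⟫ / ⟪xᵢ, xᵢ⟫`, which says that
`xᵢ ↦ xᵢ' - cᵢ xᵢ` extends to a skew endomorphism.
-/

open Real

section BilinForm

variable {R M ι : Type*} [CommRing R] [AddCommGroup M] [Module R M]
  (B : LinearMap.BilinForm R M) (b : Module.Basis ι R M)

theorem Module.Basis.bilinForm_constr_constr {f : ι → M}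
    (hf : ∀ i j, B (f i) (f j) = B (b i) (b j)) (x y : M) :
    B (b.constr R f x) (b.constr R f y) = B x y := by
  have : B.compl₁₂ (b.constr R f) (b.constr R f) = B :=
    LinearMap.ext_basis b b fun i j => by simp [hf]
  exact LinearMap.congr_fun₂ this x y

theorem Module.Basis.bilinForm_constr_sub_smul_skew {D : ι → M} {c : ι → R}
    (hD : ∀ i j, B (D i) (b j) + B (b i) (D j) = (c i + c j) * B (b i) (b j)) (x y : M) :
    B (b.constr R (fun i => D i - c i • b i) x) y +
      B x (b.constr R (fun i => D i - c i • b i) y) = 0 := by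
  have : B.compl₁₂ (b.constr R fun i => D i - c i • b i) LinearMap.id +
      B.compl₁₂ LinearMap.id (b.constr R fun i => D i - c i • b i) = 0 :=
    LinearMap.ext_basis b b fun i j => by
      simp only [LinearMap.add_apply, LinearMap.compl₁₂_apply, b.constr_basis, LinearMap.id_apply,
        map_sub, map_smul, LinearMap.sub_apply, LinearMap.smul_apply, smul_eq_mul,
        LinearMap.zero_apply]
      linear_combination hD i j
  exact LinearMap.congr_fun₂ this x y

end BilinForm

lemma one_lt_abs_div_sqrt_mul_sqrt {a b c : ℝ} (ha : 0 < a) (hc : 0 < c) (hac : a * c < b ^ 2) :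
    1 < |b| / (√a * √c) := by
  rw [← sqrt_mul ha.le, ← sqrt_sq_eq_abs, one_lt_div (by positivity)]
  exact sqrt_lt_sqrt (by positivity) hac

lemma neg_and_mul_lt_sq_of_quadratic_neg {a b c t : ℝ} (ha : 0 < a) (hc : 0 < c)
    (ht : t ∈ Set.Ioo 0 1) (h : (1 - t) ^ 2 * a + 2 * (1 - t) * t * b + t ^ 2 * c < 0) :
    b < 0 ∧ a * c < b ^ 2 := by
  obtain ⟨ht0, ht1⟩ := ht
  have hst : 0 < (1 - t) * t := mul_pos (by linarith) ht0
  have hpos : 0 < (1 - t) ^ 2 * a + t ^ 2 * c := by positivity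
  have hb : b < 0 := by nlinarith
  refine ⟨hb, ?_⟩
  nlinarith [sq_nonneg ((1 - t) ^ 2 * a - t ^ 2 * c), mul_pos hst hst]

lemma HasDerivAt.mink3 {X Y : ℝ → Fin 3 → ℝ} {X' Y' : Fin 3 → ℝ} {t : ℝ}
    (hX : HasDerivAt X X' t) (hY : HasDerivAt Y Y' t) :
    HasDerivAt (fun s => mink3 (X s) (Y s)) (mink3 X' (Y t) + mink3 (X t) Y') t := by
  have hx := hasDerivAt_pi.1 hX
  have hy := hasDerivAt_pi.1 hY
  exact ((((hx 0).fun_mul (hy 0)).fun_neg.fun_add ((hx 1).fun_mul (hy 1))).fun_add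
    ((hx 2).fun_mul (hy 2))).congr_deriv (by unfold _root_.mink3; ring)

lemma differentiableAt_lift2 {γ : ℝ → E2} {t : ℝ} (h : DifferentiableAt ℝ γ t) :
    DifferentiableAt ℝ (fun s => lift2 (γ s)) t := by
  rw [differentiableAt_pi]
  intro k
  fin_cases k <;>
    simp only [lift2, Fin.isValue, Fin.zero_eta, Fin.mk_one, Fin.reduceFinMk, Matrix.cons_val_zero,
      Matrix.cons_val_one, Matrix.cons_val] <;>
    fun_prop

lemma eq_mul_of_deriv_arcosh_eq_zero {F Qi Qj : ℝ → ℝ} {F' Qi' Qj' t : ℝ}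
    (hF : HasDerivAt F F' t) (hQi : HasDerivAt Qi Qi' t) (hQj : HasDerivAt Qj Qj' t)
    (hQi0 : 0 < Qi t) (hQj0 : 0 < Qj t) (hF0 : F t < 0) (hlt : Qi t * Qj t < F t ^ 2)
    (hd : deriv (fun s => arcosh (|F s| / (√(Qi s) * √(Qj s)))) t = 0) :
    F' = F t * (Qi' / (2 * Qi t) + Qj' / (2 * Qj t)) := by
  set N := fun s => -F s / (√(Qi s) * √(Qj s))
  have hNeq : (fun s => arcosh (|F s| / (√(Qi s) * √(Qj s)))) =ᶠ[nhds t] fun s => arcosh (N s) := by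
    filter_upwards [hF.continuousAt.preimage_mem_nhds (Iio_mem_nhds hF0)] with s hs
    rw [abs_of_neg hs]
  have hN1 : 1 < N t := by
    simpa [N, abs_of_neg hF0] using one_lt_abs_div_sqrt_mul_sqrt hQi0 hQj0 hlt
  have hsi := sqrt_pos.2 hQi0
  have hsj := sqrt_pos.2 hQj0
  have hN : HasDerivAt N (N t * (F' / F t - Qi' / (2 * Qi t) - Qj' / (2 * Qj t))) t := by
    refine (hF.neg.div ((hQi.sqrt hQi0.ne').mul (hQj.sqrt hQj0.ne'))
      (mul_pos hsi hsj).ne').congr_deriv ?_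
    have := hF0.ne
    simp only [N, Pi.mul_apply, Pi.neg_apply]
    field_simp
    rw [sq_sqrt hQi0.le, sq_sqrt hQj0.le]
    ring
  have hcomp : HasDerivAt (fun s => arcosh (N s)) _ t := (hasDerivAt_arcosh hN1).comp t hN
  rw [hNeq.deriv_eq, hcomp.deriv] at hd
  have hsq : (√(N t ^ 2 - 1))⁻¹ ≠ 0 := inv_ne_zero (sqrt_pos.2 (by nlinarith)).ne'
  have hrel := (mul_eq_zero.1 ((mul_eq_zero.1 hd).resolve_left hsq)).resolve_left (by linarith)
  rw [sub_sub, sub_eq_zero, div_eq_iff hF0.ne] at hrel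
  rw [hrel, mul_comm]

def minkForm : LinearMap.BilinForm ℝ (Fin 3 → ℝ) :=
  LinearMap.mk₂ ℝ mink3 (fun _ _ _ => by simp only [mink3, Pi.add_apply]; ring)
    (fun _ _ _ => by simp only [mink3, Pi.smul_apply, smul_eq_mul]; ring)
    (fun _ _ _ => by simp only [mink3, Pi.add_apply]; ring)
    (fun _ _ _ => by simp only [mink3, Pi.smul_apply, smul_eq_mul]; ring)

@[simp]
lemma minkForm_apply (x y : Fin 3 → ℝ) : minkForm x y = mink3 x y := rfl

lemma mink3_lift2 (p q : E2) : mink3 (lift2 p) (lift2 q) = ⟪p, q⟫ - 1 := by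
  simp only [mink3, lift2, Fin.isValue, Matrix.cons_val_zero, mul_one, Matrix.cons_val_one,
    Matrix.cons_val, PiLp.inner_apply, RCLike.inner_apply, ringHom_apply, Fin.sum_univ_two]
  ring

lemma lift2_add_smul_sub (p q : E2) (t : ℝ) :
    lift2 (p + t • (q - p)) = (1 - t) • lift2 p + t • lift2 q := by
  ext k
  fin_cases k <;> simp [lift2] <;> ring

lemma mink3_smul_add_smul_self (a b : ℝ) (x y : Fin 3 → ℝ) :
    mink3 (a • x + b • y) (a • x + b • y) =
      a ^ 2 * mink3 x x + 2 * a * b * mink3 x y + b ^ 2 * mink3 y y := by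
  simp only [mink3, Pi.add_apply, Pi.smul_apply, smul_eq_mul]
  ring

lemma linearIndependent_lift2 {v : Fin 3 → E2} (hv : AffineIndependent ℝ v) :
    LinearIndependent ℝ (fun i => lift2 (v i)) := by
  rw [Fintype.linearIndependent_iff]
  intro g hg i
  have hcoord : ∀ k, ∑ i, g i * lift2 (v i) k = 0 := fun k => by
    simpa [Finset.sum_apply] using congrFun hg k
  refine hv.eq_zero_of_sum_eq_zero (s := Finset.univ) (by simpa [lift2] using hcoord 0) ?_ i
    (Finset.mem_univ i)
  ext k
  fin_cases k
  · simpa [lift2] using hcoord 1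
  · simpa [lift2] using hcoord 2

lemma hlen2_eq_arcosh (p q : E2) :
    hlen2 p q = arcosh (|mink3 (lift2 p) (lift2 q)| /
      (√(mink3 (lift2 p) (lift2 p)) * √(mink3 (lift2 q) (lift2 q)))) := by
  simp only [mink3_lift2, real_inner_self_eq_norm_sq]
  rfl

noncomputable def liftNorm (p : E2) : ℝ := √(mink3 (lift2 p) (lift2 p))

namespace IsStrictHyperidealTriangle

variable {v : Fin 3 → E2}

lemma mink3_lift2_self_pos (hv : IsStrictHyperidealTriangle v) (i : Fin 3) :
    0 < mink3 (lift2 (v i)) (lift2 (v i)) := by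
  rw [mink3_lift2, real_inner_self_eq_norm_sq]
  nlinarith [hv.2.1 i, norm_nonneg (v i)]

lemma mink3_lift2_neg_and_lt_sq (hv : IsStrictHyperidealTriangle v) {i j : Fin 3} (hij : i ≠ j) :
    mink3 (lift2 (v i)) (lift2 (v j)) < 0 ∧
      mink3 (lift2 (v i)) (lift2 (v i)) * mink3 (lift2 (v j)) (lift2 (v j)) <
        mink3 (lift2 (v i)) (lift2 (v j)) ^ 2 := by
  obtain ⟨t, ht, hnorm⟩ := hv.2.2 i j hij
  refine neg_and_mul_lt_sq_of_quadratic_neg (hv.mink3_lift2_self_pos i)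
    (hv.mink3_lift2_self_pos j) ht ?_
  rw [← mink3_smul_add_smul_self, ← lift2_add_smul_sub, mink3_lift2, real_inner_self_eq_norm_sq]
  nlinarith [norm_nonneg (v i + t • (v j - v i))]

lemma liftNorm_pos (hv : IsStrictHyperidealTriangle v) (i : Fin 3) : 0 < liftNorm (v i) :=
  sqrt_pos.2 (hv.mink3_lift2_self_pos i)

lemma mink3_lift2_eq_mul_cosh (hv : IsStrictHyperidealTriangle v) (i j : Fin 3) :
    mink3 (lift2 (v i)) (lift2 (v j)) =
      liftNorm (v i) * liftNorm (v j) * if i = j then 1 else -cosh (hlen2 (v i) (v j)) := by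
  have hpos := hv.mink3_lift2_self_pos
  split_ifs with hij
  · subst hij
    rw [mul_one, liftNorm, mul_self_sqrt (hpos i).le]
  · obtain ⟨hneg, hlt⟩ := hv.mink3_lift2_neg_and_lt_sq hij
    rw [hlen2_eq_arcosh, cosh_arcosh (one_lt_abs_div_sqrt_mul_sqrt (hpos i) (hpos j) hlt).le,
      abs_of_neg hneg, liftNorm, liftNorm]
    have := (sqrt_pos.2 (hpos i)).ne'
    have := (sqrt_pos.2 (hpos j)).ne'
    field_simp

noncomputable def liftBasis (hv : IsStrictHyperidealTriangle v) :
    Module.Basis (Fin 3) ℝ (Fin 3 → ℝ) :=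
  basisOfLinearIndependentOfCardEqFinrank (linearIndependent_lift2 hv.1) (by simp)

@[simp]
lemma liftBasis_apply (hv : IsStrictHyperidealTriangle v) (i : Fin 3) :
    hv.liftBasis i = lift2 (v i) := by
  simp [liftBasis]

theorem exists_lorentz_of_hlen2_eq {w : Fin 3 → E2} (hv : IsStrictHyperidealTriangle v)
    (hw : IsStrictHyperidealTriangle w)
    (hl : ∀ i j, i ≠ j → hlen2 (v i) (v j) = hlen2 (w i) (w j)) :
    ∃ g : (Fin 3 → ℝ) →ₗ[ℝ] (Fin 3 → ℝ),
      (∀ x y, mink3 (g x) (g y) = mink3 x y) ∧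
      ∀ i, ∃ c : ℝ, c ≠ 0 ∧ g (lift2 (v i)) = c • lift2 (w i) := by
  set f := fun i => (liftNorm (v i) / liftNorm (w i)) • lift2 (w i)
  have hf : ∀ i j, minkForm (f i) (f j) = minkForm (hv.liftBasis i) (hv.liftBasis j) := by
    intro i j
    simp only [f, liftBasis_apply, map_smul, LinearMap.smul_apply, smul_eq_mul, minkForm_apply]
    rw [hv.mink3_lift2_eq_mul_cosh, hw.mink3_lift2_eq_mul_cosh]
    have hcosh : (if i = j then 1 else -cosh (hlen2 (w i) (w j))) =
        if i = j then 1 else -cosh (hlen2 (v i) (v j)) := by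
      split_ifs with hij
      · rfl
      · rw [hl i j hij]
    have := (hw.liftNorm_pos i).ne'
    have := (hw.liftNorm_pos j).ne'
    rw [hcosh]
    field_simp
  refine ⟨hv.liftBasis.constr ℝ f, hv.liftBasis.bilinForm_constr_constr minkForm hf,
    fun i => ⟨_, div_ne_zero (hv.liftNorm_pos i).ne' (hw.liftNorm_pos i).ne', ?_⟩⟩
  rw [← liftBasis_apply hv, Module.Basis.constr_basis]

theorem exists_skew_of_deriv_hlen2_eq_zero (hv : IsStrictHyperidealTriangle v)
    {γ : ℝ → Fin 3 → E2} (hγ : ∀ i, DifferentiableAt ℝ (fun s => γ s i) 0) (hγ0 : γ 0 = v)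
    (hl : ∀ i j, i ≠ j → deriv (fun s => hlen2 (γ s i) (γ s j)) 0 = 0) :
    ∃ B : (Fin 3 → ℝ) →ₗ[ℝ] (Fin 3 → ℝ),
      (∀ x y, mink3 (B x) y + mink3 x (B y) = 0) ∧
      ∃ c : Fin 3 → ℝ,
        ∀ i, deriv (fun s => lift2 (γ s i)) 0 = B (lift2 (v i)) + c i • lift2 (v i) := by
  set D := fun i => deriv (fun s => lift2 (γ s i)) 0
  have hD : ∀ i, HasDerivAt (fun s => lift2 (γ s i)) (D i) 0 := fun i =>
    (differentiableAt_lift2 (hγ i)).hasDerivAt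
  have hgram : ∀ i j, HasDerivAt (fun s => mink3 (lift2 (γ s i)) (lift2 (γ s j)))
      (mink3 (D i) (lift2 (v j)) + mink3 (lift2 (v i)) (D j)) 0 := fun i j => by
    simpa [hγ0] using (hD i).mink3 (hD j)
  set c := fun i => (mink3 (D i) (lift2 (v i)) + mink3 (lift2 (v i)) (D i)) /
    (2 * mink3 (lift2 (v i)) (lift2 (v i)))
  have hc : ∀ i j, minkForm (D i) (hv.liftBasis j) + minkForm (hv.liftBasis i) (D j) =
      (c i + c j) * minkForm (hv.liftBasis i) (hv.liftBasis j) := by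
    intro i j
    simp only [minkForm_apply, liftBasis_apply, c]
    rcases eq_or_ne i j with rfl | hij
    · have := (hv.mink3_lift2_self_pos i).ne'
      field_simp
      ring
    · obtain ⟨hneg, hlt⟩ := hv.mink3_lift2_neg_and_lt_sq hij
      have := eq_mul_of_deriv_arcosh_eq_zero (hgram i j) (hgram i i) (hgram j j)
        (by simpa [hγ0] using hv.mink3_lift2_self_pos i)
        (by simpa [hγ0] using hv.mink3_lift2_self_pos j) (by simpa [hγ0] using hneg)
        (by simpa [hγ0] using hlt) (by simpa [← hlen2_eq_arcosh] using hl i j hij)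
      simp only [hγ0] at this
      rw [this]
      ring
  refine ⟨_, hv.liftBasis.bilinForm_constr_sub_smul_skew minkForm hc, c, fun i => ?_⟩
  rw [← liftBasis_apply hv, Module.Basis.constr_basis, sub_add_cancel]

end IsStrictHyperidealTriangle

theorem stmt_9_general (l : Fin 3 → Fin 3 → ℝ) :
    (∀ v w : Fin 3 → E2,
      IsStrictHyperidealTriangle v → IsStrictHyperidealTriangle w →
      (∀ i j, i ≠ j → hlen2 (v i) (v j) = l i j) →
      (∀ i j, i ≠ j → hlen2 (w i) (w j) = l i j) →
      ∃ g : (Fin 3 → ℝ) →ₗ[ℝ] (Fin 3 → ℝ),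
        (∀ x y, mink3 (g x) (g y) = mink3 x y) ∧
        ∀ i, ∃ c : ℝ, c ≠ 0 ∧ g (lift2 (v i)) = c • lift2 (w i)) ∧
    (∀ v : Fin 3 → E2, IsStrictHyperidealTriangle v →
      ∀ γ : ℝ → Fin 3 → E2,
        (∀ i, DifferentiableAt ℝ (fun s => γ s i) 0) → γ 0 = v →
        (∀ i j, i ≠ j → deriv (fun s => hlen2 (γ s i) (γ s j)) 0 = 0) →
        ∃ B : (Fin 3 → ℝ) →ₗ[ℝ] (Fin 3 → ℝ),
          (∀ x y, mink3 (B x) y + mink3 x (B y) = 0) ∧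
          ∃ c : Fin 3 → ℝ,
            ∀ i, deriv (fun s => lift2 (γ s i)) 0 = B (lift2 (v i)) + c i • lift2 (v i)) :=
  ⟨fun _ _ hv hw hlv hlw => hv.exists_lorentz_of_hlen2_eq hw fun i j hij =>
      (hlv i j hij).trans (hlw i j hij).symm,
    fun _ hv _ hγ hγ0 hl => hv.exists_skew_of_deriv_hlen2_eq_zero hγ hγ0 hl⟩

/-- A strictly hyperideal triangle is determined, up to isometries of `H²` extended to
the projective plane (projective transformations induced by Lorentz transformations of
`ℝ³` acting on homogeneous lifts), by its three edge lengths; moreover it admits no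
nontrivial infinitesimal deformation preserving the edge lengths: any first-order
deformation preserving the edge lengths is induced by an infinitesimal Lorentz
transformation (a `mink3`-skew endomorphism) acting on the homogeneous lifts, up to
projective rescaling. -/
theorem stmt_9 (l : Fin 3 → Fin 3 → ℝ) (hl : ∀ i j, i ≠ j → 0 < l i j) :
    (∀ v w : Fin 3 → E2,
      IsStrictHyperidealTriangle v → IsStrictHyperidealTriangle w →
      (∀ i j, i ≠ j → hlen2 (v i) (v j) = l i j) →
      (∀ i j, i ≠ j → hlen2 (w i) (w j) = l i j) →
      ∃ g : (Fin 3 → ℝ) →ₗ[ℝ] (Fin 3 → ℝ),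
        (∀ x y, mink3 (g x) (g y) = mink3 x y) ∧
        ∀ i, ∃ c : ℝ, c ≠ 0 ∧ g (lift2 (v i)) = c • lift2 (w i)) ∧
    (∀ v : Fin 3 → E2, IsStrictHyperidealTriangle v →
      ∀ γ : ℝ → Fin 3 → E2,
        (∀ i, DifferentiableAt ℝ (fun s => γ s i) 0) → γ 0 = v →
        (∀ i j, i ≠ j → deriv (fun s => hlen2 (γ s i) (γ s j)) 0 = 0) →
        ∃ B : (Fin 3 → ℝ) →ₗ[ℝ] (Fin 3 → ℝ),
          (∀ x y, mink3 (B x) y + mink3 x (B y) = 0) ∧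
          ∃ c : Fin 3 → ℝ,
            ∀ i, deriv (fun s => lift2 (γ s i)) 0 = B (lift2 (v i)) + c i • lift2 (v i)) :=
  stmt_9_general l
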